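/- Let Γ be a linearly ordered abelian group and p a prime. Let D be the collection of all convex subgroups Δ of Γ such that Γ/Δ is p-divisible, and let Δ₀ be the intersection of all members of D. Then Δ₀ is a convex subgroup of Γ, and for every convex subgroup Δ of Γ with Δ₀ ⊊ Δ, the quotient Γ/Δ is p-divisible (so that Γ/Δ₀ is p-regular). -/

import Mathlib

/-- A subgroup `Δ` of a linearly ordered abelian group `Γ` is convex if whenever
`0 ≤ β ≤ δ` and `δ ∈ Δ`, then `β ∈ Δ`. -/
def IsConvexAddSubgroup {Γ : Type*} [AddCommGroup Γ] [LinearOrder Γ] [IsOrderedAddMonoid Γ] (Δ : AddSubgroup Γ) : Prop :=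
  ∀ β δ : Γ, 0 ≤ β → β ≤ δ → δ ∈ Δ → β ∈ Δ

/-- The quotient `Γ/Δ` of `Γ` by the (convex) subgroup `Δ` is `p`-divisible:
for every `γ ∈ Γ` there are `ε ∈ Γ` and `δ ∈ Δ` with `γ = p • ε + δ`. -/
def QuotPDivisible {Γ : Type*} [AddCommGroup Γ] [LinearOrder Γ] [IsOrderedAddMonoid Γ] (p : ℕ) (Δ : AddSubgroup Γ) :
    Prop :=
  ∀ γ : Γ, ∃ ε : Γ, ∃ δ ∈ Δ, γ = p • ε + δ

/-- The quotient `Γ/Δ` has rank `1`: `Δ ≠ Γ` and there is no convex subgroup strictly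
between `Δ` and `Γ`. -/
def QuotRankOne {Γ : Type*} [AddCommGroup Γ] [LinearOrder Γ] [IsOrderedAddMonoid Γ] (Δ : AddSubgroup Γ) : Prop :=
  Δ ≠ ⊤ ∧ ∀ Δ' : AddSubgroup Γ, IsConvexAddSubgroup Δ' → Δ < Δ' → Δ' = ⊤

/-- A linearly ordered abelian group `Γ` is `p`-antiregular if `Γ/Δ` is not `p`-divisible for
every convex subgroup `Δ ≠ Γ`, and no quotient of `Γ` by a convex subgroup has rank `1`. -/
def IsPAntiregular (p : ℕ) (Γ : Type*) [AddCommGroup Γ] [LinearOrder Γ] [IsOrderedAddMonoid Γ] : Prop :=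
  (∀ Δ : AddSubgroup Γ, IsConvexAddSubgroup Δ → Δ ≠ ⊤ → ¬ QuotPDivisible p Δ) ∧
  (∀ Δ : AddSubgroup Γ, IsConvexAddSubgroup Δ → ¬ QuotRankOne Δ)

/-!
Convex subgroups of a linearly ordered abelian group form a chain. Hence a convex `Δ` strictly
containing the intersection `Δ₀` of the family `D` contains some member of `D`, and
`p`-divisibility of `Γ/Δ'` passes to `Γ/Δ` for every larger `Δ ⊇ Δ'`.
-/

section

variable {Γ : Type*} [AddCommGroup Γ] [LinearOrder Γ] [IsOrderedAddMonoid Γ]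

namespace IsConvexAddSubgroup

theorem mem_of_abs_le {Δ : AddSubgroup Γ} (hΔ : IsConvexAddSubgroup Δ) {a b : Γ}
    (hab : |a| ≤ |b|) (hb : b ∈ Δ) : a ∈ Δ :=
  abs_mem_iff.1 (hΔ |a| |b| (abs_nonneg a) hab (abs_mem_iff.2 hb))

theorem le_of_mem_of_notMem {Δ₁ Δ₂ : AddSubgroup Γ} (h₁ : IsConvexAddSubgroup Δ₁)
    (h₂ : IsConvexAddSubgroup Δ₂) {a : Γ} (ha₁ : a ∈ Δ₁) (ha₂ : a ∉ Δ₂) : Δ₂ ≤ Δ₁ := by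
  intro b hb
  rcases le_total |b| |a| with hba | hab
  · exact h₁.mem_of_abs_le hba ha₁
  · exact absurd (h₂.mem_of_abs_le hab hb) ha₂

theorem sInf {S : Set (AddSubgroup Γ)} (hS : ∀ Δ ∈ S, IsConvexAddSubgroup Δ) :
    IsConvexAddSubgroup (sInf S) := by
  intro β δ hβ hβδ hδ
  rw [AddSubgroup.mem_sInf] at hδ ⊢
  exact fun Δ hΔ ↦ hS Δ hΔ β δ hβ hβδ (hδ Δ hΔ)

end IsConvexAddSubgroup

theorem QuotPDivisible.mono {p : ℕ} {Δ Δ' : AddSubgroup Γ} (h : QuotPDivisible p Δ)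
    (hle : Δ ≤ Δ') : QuotPDivisible p Δ' := fun γ ↦ by
  obtain ⟨ε, δ, hδ, hγ⟩ := h γ
  exact ⟨ε, δ, hle hδ, hγ⟩

end

theorem inter_pDivisible_convex_isConvex_and_pRegular_general (p : ℕ)
    (Γ : Type*) [AddCommGroup Γ] [LinearOrder Γ] [IsOrderedAddMonoid Γ] :
    ∃ Δ₀ : AddSubgroup Γ,
      ((Δ₀ : Set Γ) =
        ⋂ Δ ∈ {Δ : AddSubgroup Γ | IsConvexAddSubgroup Δ ∧ QuotPDivisible p Δ}, (Δ : Set Γ)) ∧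
      IsConvexAddSubgroup Δ₀ ∧
      ∀ Δ : AddSubgroup Γ, IsConvexAddSubgroup Δ → Δ₀ < Δ → QuotPDivisible p Δ := by
  set D := {Δ : AddSubgroup Γ | IsConvexAddSubgroup Δ ∧ QuotPDivisible p Δ}
  refine ⟨sInf D, AddSubgroup.coe_sInf D, IsConvexAddSubgroup.sInf fun Δ hΔ ↦ hΔ.1, ?_⟩
  intro Δ hΔ hlt
  obtain ⟨γ, hγΔ, hγ⟩ := SetLike.exists_of_lt hlt
  obtain ⟨Δ', ⟨hΔ'convex, hΔ'div⟩, hγΔ'⟩ : ∃ Δ' ∈ D, γ ∉ Δ' := by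
    simpa [AddSubgroup.mem_sInf] using hγ
  exact hΔ'div.mono (hΔ.le_of_mem_of_notMem hΔ'convex hγΔ hγΔ')

/-- Lemma: the maximal `p`-regular quotient.
Let `Γ` be a linearly ordered abelian group and `p` a prime. Let `D` be the collection of all
convex subgroups `Δ` of `Γ` with `Γ/Δ` `p`-divisible and let `Δ₀` be the intersection of all
members of `D`. Then `Δ₀` is a convex subgroup of `Γ` and `Γ/Δ` is `p`-divisible for every
convex subgroup `Δ` with `Δ₀ ⊊ Δ` (i.e. `Γ/Δ₀` is `p`-regular). -/
theorem inter_pDivisible_convex_isConvex_and_pRegular (p : ℕ) (hp : p.Prime)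
    (Γ : Type*) [AddCommGroup Γ] [LinearOrder Γ] [IsOrderedAddMonoid Γ] :
    ∃ Δ₀ : AddSubgroup Γ,
      ((Δ₀ : Set Γ) =
        ⋂ Δ ∈ {Δ : AddSubgroup Γ | IsConvexAddSubgroup Δ ∧ QuotPDivisible p Δ}, (Δ : Set Γ)) ∧
      IsConvexAddSubgroup Δ₀ ∧
      ∀ Δ : AddSubgroup Γ, IsConvexAddSubgroup Δ → Δ₀ < Δ → QuotPDivisible p Δ :=
  inter_pDivisible_convex_isConvex_and_pRegular_general p Γ
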